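/- Let B be a complex unital Banach algebra, z₀ ∈ ℂ, U an open neighborhood of z₀, n ≥ 1 an integer, b₀, …, b_{n−1} ∈ B, and R₀ : U → B holomorphic. Suppose the function R : U \ {z₀} → B defined by R(z) = Σ_{k=0}^{n−1} b_k·(z−z₀)^{−(k+1)} + R₀(z) satisfies the resolvent equation on U \ {z₀}. Then b₀ is idempotent (b₀² = b₀); b₀·b_k = b_k·b₀ = b_k for all 0 ≤ k ≤ n−1; if n ≥ 2 then b_k = b₁^k for all 1 ≤ k ≤ n−1, and b₁^n = 0. -/

import Mathlib

/-!
Put `w = z - z₀` and `b_k = 0` for `k ≥ n`. A principal part `∑ (w ^ (k + 1))⁻¹ • c_k` plus a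
function continuous at `0` can only vanish near `0` if every `c_k` does. Multiplying out the
resolvent equation `R(z) (1 - (z' - z) R(z')) = R(z')` and comparing principal parts in `z` gives
`b_k + b_{k+1} R(z') = (z' - z₀) b_k R(z')`; expanding this in turn in `z'` gives
`b_{k+1} b_t = b_k b_{t+1}` together with `b_k + b_{k+1} R₀ = b_k b₀ + (z - z₀) b_k R₀`.
Descending induction on `k` in the latter yields `b_k b₀ = b_k` (and `b_k R₀ = 0`), while the
former says that `b_i b_j` only depends on `i + j`; this gives `b₀ b_k = b_k b₀` and
`b_{k+1} = b_k b₁`.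
-/

/-- A function `R` from a subset `S ⊆ ℂ` into a complex algebra satisfies the resolvent
equation on `S` if `R z₁ - R z₂ = (z₂ - z₁) • (R z₁ * R z₂)` for all `z₁, z₂ ∈ S`. -/
def ResolventEq {B : Type*} [Ring B] [Algebra ℂ B] (S : Set ℂ) (R : ℂ → B) : Prop :=
  ∀ z₁ ∈ S, ∀ z₂ ∈ S, R z₁ - R z₂ = (z₂ - z₁) • (R z₁ * R z₂)

open Filter Finset Topology

theorem ContinuousAt.eq_of_eventually_nhdsNE {X Y : Type*} [TopologicalSpace X]
    [TopologicalSpace Y] [T2Space Y] {f : X → Y} {x : X} [(𝓝[≠] x).NeBot] {y : Y}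
    (hf : ContinuousAt f x) (h : ∀ᶠ z in 𝓝[≠] x, f z = y) : f x = y :=
  tendsto_nhds_unique_of_eventuallyEq hf.continuousWithinAt.tendsto tendsto_const_nhds h

section PrincipalPart

variable {𝕜 E : Type*}

def principalPart [Field 𝕜] [AddCommMonoid E] [Module 𝕜 E] (n : ℕ) (c : ℕ → E) (w : 𝕜) : E :=
  ∑ k ∈ range n, (w ^ (k + 1))⁻¹ • c k

section Algebra

variable [Field 𝕜] {n : ℕ} {w : 𝕜}

theorem principalPart_eq_zero [AddCommMonoid E] [Module 𝕜 E] {c : ℕ → E}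
    (hc : ∀ k < n, c k = 0) : principalPart n c w = 0 :=
  sum_eq_zero fun k hk => by rw [hc k (mem_range.mp hk), smul_zero]

theorem principalPart_sub [AddCommGroup E] [Module 𝕜 E] (c d : ℕ → E) :
    principalPart n (fun k => c k - d k) w = principalPart n c w - principalPart n d w := by
  simp only [principalPart, smul_sub, sum_sub_distrib]

theorem principalPart_add [AddCommMonoid E] [Module 𝕜 E] (c d : ℕ → E) :
    principalPart n (fun k => c k + d k) w = principalPart n c w + principalPart n d w := by
  simp only [principalPart, smul_add, sum_add_distrib]

theorem principalPart_smul [AddCommMonoid E] [Module 𝕜 E] (a : 𝕜) (c : ℕ → E) :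
    principalPart n (fun k => a • c k) w = a • principalPart n c w := by
  simp only [principalPart, smul_sum, smul_comm a]

theorem principalPart_mul_const [Ring E] [Algebra 𝕜 E] (c : ℕ → E) (A : E) :
    principalPart n (fun k => c k * A) w = principalPart n c w * A := by
  simp only [principalPart, sum_mul, smul_mul_assoc]

theorem principalPart_const_mul [Ring E] [Algebra 𝕜 E] (A : E) (c : ℕ → E) :
    principalPart n (fun k => A * c k) w = A * principalPart n c w := by
  simp only [principalPart, mul_sum, mul_smul_comm]

theorem smul_principalPart_succ [AddCommMonoid E] [Module 𝕜 E] (c : ℕ → E) (hw : w ≠ 0) :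
    w • principalPart (n + 1) c w = c 0 + principalPart n (fun k => c (k + 1)) w := by
  rw [principalPart, smul_sum, sum_range_succ', add_comm, principalPart]
  congr 1
  · simp [hw]
  · refine sum_congr rfl fun k _ => ?_
    rw [smul_smul, pow_succ, mul_inv, ← mul_assoc, mul_comm w, mul_assoc, mul_inv_cancel₀ hw,
      mul_one]

theorem smul_principalPart [AddCommMonoid E] [Module 𝕜 E] {c : ℕ → E} (hw : w ≠ 0)
    (hc : c n = 0) : w • principalPart n c w = c 0 + principalPart n (fun k => c (k + 1)) w := by
  have hsucc : principalPart (n + 1) c w = principalPart n c w := by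
    rw [principalPart, sum_range_succ, hc, smul_zero, add_zero, principalPart]
  rw [← hsucc, smul_principalPart_succ c hw]

end Algebra

variable [NontriviallyNormedField 𝕜] [NormedAddCommGroup E] [NormedSpace 𝕜 E]

theorem coeff_eq_zero_of_principalPart_add {n : ℕ} {c : ℕ → E} {g : 𝕜 → E} (hg : ContinuousAt g 0)
    (h : ∀ᶠ w in 𝓝[≠] 0, principalPart n c w + g w = 0) : (∀ k < n, c k = 0) ∧ g 0 = 0 := by
  induction n generalizing c g with
  | zero =>
    exact ⟨fun k hk => absurd hk k.not_lt_zero,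
      hg.eq_of_eventually_nhdsNE (by simpa [principalPart] using h)⟩
  | succ n ih =>
    have h' : ∀ᶠ w in 𝓝[≠] 0, principalPart n (fun k => c (k + 1)) w + (c 0 + w • g w) = 0 := by
      filter_upwards [h, self_mem_nhdsWithin] with w hw hw0
      rw [add_left_comm, ← add_assoc, ← smul_principalPart_succ c hw0, ← smul_add, hw, smul_zero]
    obtain ⟨hshift, hc0⟩ := ih (by fun_prop) h'
    have hc : ∀ k < n + 1, c k = 0 := by
      rintro (_ | k) hk
      · simpa using hc0
      · exact hshift k (by omega)
    refine ⟨hc, hg.eq_of_eventually_nhdsNE ?_⟩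
    filter_upwards [h] with w hw
    rwa [principalPart_eq_zero hc, zero_add] at hw

theorem eventually_eq_zero_of_principalPart_add {n : ℕ} {c : ℕ → E} {g : 𝕜 → E}
    (hg : ContinuousAt g 0) (h : ∀ᶠ w in 𝓝[≠] 0, principalPart n c w + g w = 0) :
    ∀ᶠ w in 𝓝[≠] 0, g w = 0 := by
  filter_upwards [h] with w hw
  rwa [principalPart_eq_zero (coeff_eq_zero_of_principalPart_add hg h).1, zero_add] at hw

end PrincipalPart

theorem ResolventEq.comp_add_left {B : Type*} [Ring B] [Algebra ℂ B] {S : Set ℂ} {R : ℂ → B}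
    (hR : ResolventEq S R) (z₀ : ℂ) : ResolventEq ((z₀ + ·) ⁻¹' S) (fun w => R (z₀ + w)) := by
  intro w₁ hw₁ w₂ hw₂
  rw [hR _ hw₁ _ hw₂, add_sub_add_left_eq_sub]

section Coefficients

variable {B : Type*} [NormedRing B] [NormedAlgebra ℂ B] {n : ℕ} {c : ℕ → B} {g R : ℂ → B}
  {S : Set ℂ}

theorem coeff_add_coeff_succ_mul_eq (hS : S ∈ 𝓝[≠] 0)
    (hR : ∀ w ∈ S, R w = principalPart n c w + g w) (hg : ContinuousAt g 0)
    (hc : ∀ k, n ≤ k → c k = 0) (hres : ResolventEq S R) {u : ℂ} (hu : u ∈ S) (k : ℕ) :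
    c k + c (k + 1) * R u = u • (c k * R u) := by
  set A := R u
  have key : ∀ᶠ w in 𝓝[≠] 0,
      principalPart n (fun j => c j + c (j + 1) * A - u • (c j * A)) w
        + (g w - A - (u - w) • (g w * A) + c 0 * A) = 0 := by
    filter_upwards [hS, self_mem_nhdsWithin] with w hw hw0
    have hshift := smul_principalPart (n := n) (c := fun j => c j * A) hw0 (by simp [hc n le_rfl])
    have heq := hres w hw u hu
    rw [hR w hw, add_mul, smul_add] at heq
    simp only [principalPart_sub, principalPart_add, principalPart_smul,
      principalPart_mul_const] at hshift ⊢
    linear_combination (norm := module) heq - hshift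
  obtain ⟨hcoef, -⟩ := coeff_eq_zero_of_principalPart_add (by fun_prop) key
  by_cases hk : k < n
  · exact sub_eq_zero.mp (hcoef k hk)
  · simp [hc k (by omega), hc (k + 1) (by omega)]

theorem coeff_relations (hS : S ∈ 𝓝[≠] 0)
    (hR : ∀ w ∈ S, R w = principalPart n c w + g w) (hg : ContinuousAt g 0)
    (hc : ∀ k, n ≤ k → c k = 0) (hres : ResolventEq S R) (k : ℕ) :
    (∀ t, c (k + 1) * c t = c k * c (t + 1)) ∧
      ∀ᶠ u in 𝓝[≠] 0, c k + c (k + 1) * g u = c k * c 0 + u • (c k * g u) := by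
  have key : ∀ᶠ u in 𝓝[≠] 0,
      principalPart n (fun t => c (k + 1) * c t - c k * c (t + 1)) u
        + (c k + c (k + 1) * g u - c k * c 0 - u • (c k * g u)) = 0 := by
    filter_upwards [hS, self_mem_nhdsWithin] with u hu hu0
    have heq := coeff_add_coeff_succ_mul_eq hS hR hg hc hres hu k
    have hshift : u • (c k * principalPart n c u)
        = c k * c 0 + c k * principalPart n (fun t => c (t + 1)) u := by
      rw [← mul_smul_comm, smul_principalPart hu0 (hc n le_rfl), mul_add]
    rw [hR u hu, mul_add, mul_add, smul_add] at heq
    simp only [principalPart_sub, principalPart_const_mul]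
    linear_combination (norm := module) heq + hshift
  refine ⟨fun t => ?_, eventually_eq_zero_of_principalPart_add (by fun_prop) key |>.mono
    fun u hu => by linear_combination (norm := module) hu⟩
  by_cases ht : t < n
  · exact sub_eq_zero.mp ((coeff_eq_zero_of_principalPart_add (by fun_prop) key).1 t ht)
  · simp [hc t (by omega), hc (t + 1) (by omega)]

theorem coeff_mul_coeff_zero (hS : S ∈ 𝓝[≠] 0)
    (hR : ∀ w ∈ S, R w = principalPart n c w + g w) (hg : ContinuousAt g 0)
    (hc : ∀ k, n ≤ k → c k = 0) (hres : ResolventEq S R) (k : ℕ) : c k * c 0 = c k := by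
  suffices ∀ m k, n ≤ k + m → c k * c 0 = c k ∧ ∀ᶠ u in 𝓝[≠] 0, c k * g u = 0 from
    (this n k (by omega)).1
  intro m
  induction m with
  | zero => intro k hk; simp [hc k (by omega)]
  | succ m ih =>
    intro k hk
    have hev : ∀ᶠ u in 𝓝[≠] 0, u • (c k * g u) = c k - c k * c 0 := by
      filter_upwards [(coeff_relations hS hR hg hc hres k).2, (ih (k + 1) (by omega)).2]
        with u hu hnext
      rw [hnext, add_zero] at hu
      linear_combination (norm := module) -hu
    have hcont : ContinuousAt (fun u : ℂ => u • (c k * g u)) 0 := by fun_prop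
    have hconst : c k - c k * c 0 = 0 := by
      simpa using (hcont.eq_of_eventually_nhdsNE hev).symm
    refine ⟨(sub_eq_zero.mp hconst).symm, ?_⟩
    filter_upwards [hev, self_mem_nhdsWithin] with u hu hu0
    exact (smul_eq_zero.mp (hu.trans hconst)).resolve_left hu0

end Coefficients

section ShiftInvariantProducts

variable {M : Type*} [Monoid M] {c : ℕ → M}

theorem mul_eq_coeff_zero_mul (hrel : ∀ k t, c (k + 1) * c t = c k * c (t + 1)) (i j : ℕ) :
    c i * c j = c 0 * c (i + j) := by
  induction i generalizing j with
  | zero => rw [zero_add]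
  | succ i ih => rw [hrel, ih, add_right_comm, add_assoc]

theorem coeff_zero_mul (hrel : ∀ k t, c (k + 1) * c t = c k * c (t + 1))
    (hidem : ∀ k, c k * c 0 = c k) (k : ℕ) : c 0 * c k = c k :=
  (mul_eq_coeff_zero_mul hrel k 0).symm.trans (hidem k)

theorem coeff_eq_pow (hrel : ∀ k t, c (k + 1) * c t = c k * c (t + 1))
    (hidem : ∀ k, c k * c 0 = c k) {k : ℕ} (hk : 1 ≤ k) : c k = c 1 ^ k := by
  induction k, hk using Nat.le_induction with
  | base => rw [pow_one]
  | succ k _ ih => rw [← hidem, hrel, ih, pow_succ]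

end ShiftInvariantProducts

theorem laurent_coeff_structure_of_resolventEq_general
    (B : Type*) [NormedRing B] [NormedAlgebra ℂ B]
    (z₀ : ℂ) (U : Set ℂ) (hU : IsOpen U) (hz₀ : z₀ ∈ U)
    (n : ℕ) (hn : 1 ≤ n) (b : ℕ → B) (R₀ : ℂ → B) (hR₀ : DifferentiableOn ℂ R₀ U)
    (R : ℂ → B)
    (hR : ∀ z ∈ U \ {z₀},
      R z = (∑ k ∈ Finset.range n, ((z - z₀) ^ (k + 1))⁻¹ • b k) + R₀ z)
    (hres : ResolventEq (U \ {z₀}) R) :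
    b 0 * b 0 = b 0 ∧
    (∀ k < n, b 0 * b k = b k ∧ b k * b 0 = b k) ∧
    (2 ≤ n → (∀ k, 1 ≤ k → k ≤ n - 1 → b k = b 1 ^ k) ∧ b 1 ^ n = 0) := by
  obtain ⟨c, hcb, hc⟩ : ∃ c : ℕ → B, (∀ k < n, c k = b k) ∧ ∀ k, n ≤ k → c k = 0 :=
    ⟨fun k => if k < n then b k else 0, fun k hk => if_pos hk, fun k hk => if_neg (by omega)⟩
  have hS : (z₀ + ·) ⁻¹' (U \ {z₀}) ∈ 𝓝[≠] (0 : ℂ) := by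
    have hU' : (z₀ + ·) ⁻¹' U ∈ 𝓝 (0 : ℂ) :=
      (continuous_const_add z₀).continuousAt.preimage_mem_nhds (by simpa using hU.mem_nhds hz₀)
    simpa [Set.preimage_sdiff] using sdiff_mem_nhdsWithin_compl hU' {0}
  have hR' : ∀ w ∈ (z₀ + ·) ⁻¹' (U \ {z₀}),
      R (z₀ + w) = principalPart n c w + R₀ (z₀ + w) := fun w hw => by
    rw [hR _ hw, add_sub_cancel_left, principalPart]
    exact congrArg (· + _) (sum_congr rfl fun k hk => by rw [hcb k (mem_range.mp hk)])
  have hg : ContinuousAt (fun w => R₀ (z₀ + w)) 0 :=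
    (hR₀.continuousOn.continuousAt (hU.mem_nhds hz₀)).comp_of_eq (by fun_prop) (add_zero z₀)
  have hrel k := (coeff_relations hS hR' hg hc (hres.comp_add_left z₀) k).1
  have hidem := coeff_mul_coeff_zero hS hR' hg hc (hres.comp_add_left z₀)
  refine ⟨?_, fun k hk => ?_, fun hn2 => ⟨fun k hk₁ hk₂ => ?_, ?_⟩⟩
  · rw [← hcb 0 hn]
    exact hidem 0
  · rw [← hcb 0 hn, ← hcb k hk]
    exact ⟨coeff_zero_mul hrel hidem k, hidem k⟩
  · rw [← hcb k (by omega), ← hcb 1 hn2]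
    exact coeff_eq_pow hrel hidem hk₁
  · rw [← hcb 1 hn2, ← coeff_eq_pow hrel hidem hn, hc n le_rfl]

/-- If `R(z) = Σ_{k<n} b_k (z-z₀)^{-(k+1)} + R₀(z)` (with `R₀` holomorphic
on a neighborhood `U` of `z₀`) satisfies the resolvent equation on `U \ {z₀}`, then
`b₀` is idempotent, `b₀ b_k = b_k b₀ = b_k` for `k ≤ n-1`, and if `n ≥ 2` then
`b_k = b₁^k` for `1 ≤ k ≤ n-1` and `b₁^n = 0`. -/
theorem laurent_coeff_structure_of_resolventEq
    (B : Type*) [NormedRing B] [NormedAlgebra ℂ B] [CompleteSpace B]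
    (z₀ : ℂ) (U : Set ℂ) (hU : IsOpen U) (hz₀ : z₀ ∈ U)
    (n : ℕ) (hn : 1 ≤ n) (b : ℕ → B) (R₀ : ℂ → B) (hR₀ : DifferentiableOn ℂ R₀ U)
    (R : ℂ → B)
    (hR : ∀ z ∈ U \ {z₀},
      R z = (∑ k ∈ Finset.range n, ((z - z₀) ^ (k + 1))⁻¹ • b k) + R₀ z)
    (hres : ResolventEq (U \ {z₀}) R) :
    b 0 * b 0 = b 0 ∧
    (∀ k < n, b 0 * b k = b k ∧ b k * b 0 = b k) ∧
    (2 ≤ n → (∀ k, 1 ≤ k → k ≤ n - 1 → b k = b 1 ^ k) ∧ b 1 ^ n = 0) :=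
  laurent_coeff_structure_of_resolventEq_general B z₀ U hU hz₀ n hn b R₀ hR₀ R hR hres
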